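/- Correctness of the sequential triangle-counting algorithm: for a finite simple graph G with degree-based ordering ≺, the total number of triangles in G equals Σ_{v∈V} Σ_{u∈N_v} |N_v ∩ N_u|; i.e., each triangle is counted exactly once in this double sum. -/
import Mathlib


/-- Degree-based ordering: `u ≺ v` iff `deg u < deg v`, or degrees equal and `u < v`. -/
def degPrec {V : Type*} [Fintype V] [LinearOrder V] (G : SimpleGraph V) [DecidableRel G.Adj]
    (u v : V) : Prop :=
  G.degree u < G.degree v ∨ (G.degree u = G.degree v ∧ u < v)

instance {V : Type*} [Fintype V] [LinearOrder V] (G : SimpleGraph V) [DecidableRel G.Adj] :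
    DecidableRel (degPrec G) := fun u v => by unfold degPrec; infer_instance

/-- `N_v`: the neighbors of `v` that come after `v` in the degree-based ordering. -/
def Nout {V : Type*} [Fintype V] [LinearOrder V] (G : SimpleGraph V) [DecidableRel G.Adj]
    (v : V) : Finset V :=
  (G.neighborFinset v).filter (fun u => degPrec G v u)

section Aux

variable {V : Type*} [Fintype V] [LinearOrder V] (G : SimpleGraph V) [DecidableRel G.Adj]

lemma degPrec_trans {a b c : V} (h1 : degPrec G a b) (h2 : degPrec G b c) : degPrec G a c := by
  unfold degPrec at *
  rcases h1 with h1 | ⟨h1, h1'⟩ <;> rcases h2 with h2 | ⟨h2, h2'⟩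
  · exact Or.inl (h1.trans h2)
  · exact Or.inl (h2 ▸ h1)
  · exact Or.inl (h1 ▸ h2)
  · exact Or.inr ⟨h1.trans h2, h1'.trans h2'⟩

lemma degPrec_asymm {a b : V} (h1 : degPrec G a b) (h2 : degPrec G b a) : False := by
  unfold degPrec at *
  rcases h1 with h1 | ⟨h1, h1'⟩ <;> rcases h2 with h2 | ⟨h2, h2'⟩
  · omega
  · omega
  · omega
  · exact absurd h2' (not_lt.2 h1'.le)

lemma degPrec_ne {a b : V} (h : degPrec G a b) : a ≠ b := by
  rintro rfl
  exact degPrec_asymm G h h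

lemma degPrec_total {a b : V} (h : a ≠ b) : degPrec G a b ∨ degPrec G b a := by
  unfold degPrec
  rcases lt_trichotomy (G.degree a) (G.degree b) with h' | h' | h'
  · exact Or.inl (Or.inl h')
  · rcases h.lt_or_gt with hh | hh
    · exact Or.inl (Or.inr ⟨h', hh⟩)
    · exact Or.inr (Or.inr ⟨h'.symm, hh⟩)
  · exact Or.inr (Or.inl h')

lemma chain_eq {v u w v' u' w' : V} (h1 : degPrec G v u) (h2 : degPrec G u w)
    (h1' : degPrec G v' u') (h2' : degPrec G u' w')
    (hs : ({v, u, w} : Finset V) = {v', u', w'}) : v = v' ∧ u = u' ∧ w = w' := by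
  have h3 : degPrec G v w := degPrec_trans G h1 h2
  have h3' : degPrec G v' w' := degPrec_trans G h1' h2'
  have hvmem : v ∈ ({v', u', w'} : Finset V) := hs ▸ (by simp)
  have humem : u ∈ ({v', u', w'} : Finset V) := hs ▸ (by simp)
  have hwmem : w ∈ ({v', u', w'} : Finset V) := hs ▸ (by simp)
  have hv'mem : v' ∈ ({v, u, w} : Finset V) := hs ▸ (by simp)
  have hu'mem : u' ∈ ({v, u, w} : Finset V) := hs ▸ (by simp)
  simp only [Finset.mem_insert, Finset.mem_singleton] at hvmem humem hwmem hv'mem hu'mem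
  have hvv : v = v' := by
    rcases hvmem with h | h | h
    · exact h
    · -- v = u', so v' ≺ v
      subst h
      rcases hv'mem with h | h | h
      · exact h.symm
      · exact absurd h1 (fun hh => degPrec_asymm G hh (h ▸ h1'))
      · exact absurd h3 (fun hh => degPrec_asymm G hh (h ▸ h1'))
    · -- v = w', so v' ≺ v
      subst h
      rcases hv'mem with h | h | h
      · exact h.symm
      · exact absurd h1 (fun hh => degPrec_asymm G hh (h ▸ h3'))
      · exact absurd h3 (fun hh => degPrec_asymm G hh (h ▸ h3'))
  subst hvv
  have huu : u = u' := by
    rcases humem with h | h | h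
    · exact absurd h.symm (degPrec_ne G h1)
    · exact h
    · -- u = w', so u' ≺ u
      subst h
      rcases hu'mem with h | h | h
      · exact absurd (degPrec_ne G (h ▸ h1')) (by simp)
      · exact absurd (degPrec_ne G (h ▸ h2')) (by simp)
      · exact absurd (degPrec_asymm G h2 (h ▸ h2')) (by simp)
  subst huu
  refine ⟨rfl, rfl, ?_⟩
  rcases hwmem with h | h | h
  · exact absurd h.symm (degPrec_ne G h3)
  · exact absurd h.symm (degPrec_ne G h2)
  · exact h

lemma order3 {a b c : V} (hab : a ≠ b) (hac : a ≠ c) (hbc : b ≠ c) :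
    ∃ x y z, degPrec G x y ∧ degPrec G y z ∧ ({x, y, z} : Finset V) = {a, b, c} := by
  rcases degPrec_total G hab with h | h <;> rcases degPrec_total G hac with h' | h' <;>
    rcases degPrec_total G hbc with h'' | h''
  · exact ⟨a, b, c, h, h'', rfl⟩
  · exact ⟨a, c, b, h', h'', by ext x; simp; tauto⟩
  · exact absurd (degPrec_trans G h h'') (fun hh => degPrec_asymm G hh h')
  · exact ⟨c, a, b, h', h, by ext x; simp; tauto⟩
  · exact ⟨b, a, c, h, h', by ext x; simp; tauto⟩
  · exact absurd (degPrec_trans G h'' h) (fun hh => degPrec_asymm G hh h')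
  · exact ⟨b, c, a, h'', h', by ext x; simp; tauto⟩
  · exact ⟨c, b, a, h'', h, by ext x; simp; tauto⟩

end Aux

/-- Correctness of the sequential algorithm:
`T(G) = ∑_{v} ∑_{u ∈ N_v} |N_v ∩ N_u|`. -/
theorem sequential_triangle_count_correct {V : Type*} [Fintype V] [LinearOrder V]
    (G : SimpleGraph V) [DecidableRel G.Adj] :
    (G.cliqueFinset 3).card
      = ∑ v : V, ∑ u ∈ Nout G v, (Nout G v ∩ Nout G u).card := by
  classical
  have hsum : ∑ v : V, ∑ u ∈ Nout G v, (Nout G v ∩ Nout G u).card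
      = (Finset.univ.sigma (fun v : V =>
          (Nout G v).sigma (fun u => Nout G v ∩ Nout G u))).card := by
    rw [Finset.card_sigma]
    refine Finset.sum_congr rfl fun v _ => ?_
    rw [Finset.card_sigma]
  rw [hsum]
  symm
  apply Finset.card_bij (fun (p : (_ : V) × (_ : V) × V) _ => ({p.1, p.2.1, p.2.2} : Finset V))
  · -- maps to
    rintro ⟨v, u, w⟩ hp
    simp only [Finset.mem_sigma, Finset.mem_univ, true_and, Finset.mem_inter, Nout,
      Finset.mem_filter, SimpleGraph.mem_neighborFinset] at hp
    obtain ⟨⟨hvu, hpvu⟩, ⟨hvw, hpvw⟩, ⟨huw, hpuw⟩⟩ := hp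
    rw [SimpleGraph.mem_cliqueFinset_iff, SimpleGraph.is3Clique_triple_iff]
    exact ⟨hvu, hvw, huw⟩
  · -- injective
    rintro ⟨v, u, w⟩ hp ⟨v', u', w'⟩ hp' heq
    simp only [Finset.mem_sigma, Finset.mem_univ, true_and, Finset.mem_inter, Nout,
      Finset.mem_filter, SimpleGraph.mem_neighborFinset] at hp hp'
    obtain ⟨⟨hvu, hpvu⟩, ⟨hvw, hpvw⟩, ⟨huw, hpuw⟩⟩ := hp
    obtain ⟨⟨hvu', hpvu'⟩, ⟨hvw', hpvw'⟩, ⟨huw', hpuw'⟩⟩ := hp'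
    obtain ⟨e1, e2, e3⟩ := chain_eq G hpvu hpuw hpvu' hpuw' heq
    subst e1; subst e2; subst e3; rfl
  · -- surjective
    intro s hs
    rw [SimpleGraph.mem_cliqueFinset_iff] at hs
    obtain ⟨a, b, c, hab, hac, hbc, rfl⟩ := Finset.card_eq_three.mp hs.2
    obtain ⟨x, y, z, hxy, hyz, hset⟩ := order3 G hab hac hbc
    have hclique := hs.1
    have hxz := degPrec_trans G hxy hyz
    have hxmem : x ∈ ({a, b, c} : Finset V) := hset ▸ (by simp)
    have hymem : y ∈ ({a, b, c} : Finset V) := hset ▸ (by simp)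
    have hzmem : z ∈ ({a, b, c} : Finset V) := hset ▸ (by simp)
    have haxy : G.Adj x y := hclique hxmem hymem (degPrec_ne G hxy)
    have haxz : G.Adj x z := hclique hxmem hzmem (degPrec_ne G hxz)
    have hayz : G.Adj y z := hclique hymem hzmem (degPrec_ne G hyz)
    refine ⟨⟨x, y, z⟩, ?_, hset⟩
    simp only [Finset.mem_sigma, Finset.mem_univ, true_and, Finset.mem_inter, Nout,
      Finset.mem_filter, SimpleGraph.mem_neighborFinset]
    exact ⟨⟨haxy, hxy⟩, ⟨haxz, hxz⟩, ⟨hayz, hyz⟩⟩
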